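/- arXiv:1610.05558 — 3 statements merged into one kernel-verified Lean document; each statement's English description precedes it below -/
import Mathlib

section
/- Let n ≥ 1, s ∈ (0,1), and let Ω ⊂ ℝⁿ be a bounded open set. Then there exists a constant c = c(Ω,n,s) > 0 such that ‖v‖_{L²(ℝⁿ)} ≤ c ( ∬_{ℝⁿ×ℝⁿ} |v(x)−v(y)|²/|x−y|^{n+2s} dx dy )^{1/2} for every v ∈ L²(ℝⁿ) whose support is contained in the closure of Ω. -/
open MeasureTheory Real Filter Set

/-!
Enclose `closure Ω` in a ball `B(0, R)` and place a ball `K` of radius `R` in the shell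
`R ≤ ‖y‖ ≤ 3R`. A function supported in `closure Ω` vanishes on `K`, while every `x` in its
support is at distance at most `4R` from every point of `K`. Hence for such `x`
`∫ |v x - v y|² / ‖x - y‖^(n+2s) dy ≥ |K| (4R)^(-(n+2s)) |v x|²`,
and integrating in `x` bounds `‖v‖²_{L²}` by a multiple of the Gagliardo seminorm.
-/

open scoped ENNReal

theorem exists_closedBall_subset_shell {E : Type*} [NormedAddCommGroup E] [NormedSpace ℝ E]
    [Nontrivial E] {R : ℝ} (hR : 0 < R) :
    ∃ z : E, ∀ y ∈ Metric.closedBall z R, R ≤ ‖y‖ ∧ ‖y‖ ≤ 3 * R := by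
  obtain ⟨z, hz⟩ := exists_norm_eq E (by positivity : 0 ≤ 2 * R)
  refine ⟨z, fun y hy => ?_⟩
  rw [Metric.mem_closedBall, dist_eq_norm] at hy
  constructor <;> linarith [norm_sub_norm_le z y, norm_sub_rev y z, norm_le_norm_add_norm_sub' y z]

theorem eLpNorm_two_eq_lintegral_sq {α : Type*} [MeasurableSpace α] (μ : Measure α) (v : α → ℝ) :
    eLpNorm v 2 μ = (∫⁻ x, ENNReal.ofReal (v x ^ 2) ∂μ) ^ (1 / 2 : ℝ) := by
  rw [eLpNorm_eq_lintegral_rpow_enorm_toReal (by norm_num) (by norm_num)]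
  congr 2 with x
  rw [← ofReal_norm, ENNReal.toReal_ofNat, ENNReal.ofReal_rpow_of_nonneg (norm_nonneg _)
    (by norm_num), rpow_two, Real.norm_eq_abs, sq_abs]

theorem eLpNorm_two_le_of_mul_lintegral_sq_le {α : Type*} [MeasurableSpace α] {μ : Measure α}
    {v : α → ℝ} {k G : ℝ≥0∞} (hk0 : k ≠ 0) (hkt : k ≠ ⊤)
    (h : k * ∫⁻ x, ENNReal.ofReal (v x ^ 2) ∂μ ≤ G) :
    eLpNorm v 2 μ ≤ ENNReal.ofReal (k⁻¹.toReal ^ (1 / 2 : ℝ)) * G ^ (1 / 2 : ℝ) := by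
  rw [eLpNorm_two_eq_lintegral_sq, ← ENNReal.ofReal_rpow_of_nonneg ENNReal.toReal_nonneg
    (by norm_num), ENNReal.ofReal_toReal (ENNReal.inv_ne_top.2 hk0),
    ← ENNReal.mul_rpow_of_nonneg _ _ (by norm_num)]
  exact ENNReal.rpow_le_rpow ((ENNReal.mul_le_iff_le_inv hk0 hkt).1 h) (by norm_num)

theorem mul_sq_le_lintegral_sq_div_rpow {E : Type*} [NormedAddCommGroup E] [MeasurableSpace E]
    (μ : Measure E) {v : E → ℝ} {K : Set E} {x : E} {p D : ℝ} (hp : 0 ≤ p)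
    (hK : MeasurableSet K) (hvK : ∀ y ∈ K, v y = 0)
    (hxK : ∀ y ∈ K, 0 < ‖x - y‖ ∧ ‖x - y‖ ≤ D) :
    ENNReal.ofReal (D ^ p)⁻¹ * μ K * ENNReal.ofReal (v x ^ 2) ≤
      ∫⁻ y, ENNReal.ofReal ((v x - v y) ^ 2 / ‖x - y‖ ^ p) ∂μ := by
  calc ENNReal.ofReal (D ^ p)⁻¹ * μ K * ENNReal.ofReal (v x ^ 2)
      = ∫⁻ _ in K, ENNReal.ofReal (v x ^ 2 / D ^ p) ∂μ := by
        rw [setLIntegral_const, div_eq_mul_inv, ENNReal.ofReal_mul (sq_nonneg _)]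
        ring
    _ ≤ ∫⁻ y in K, ENNReal.ofReal ((v x - v y) ^ 2 / ‖x - y‖ ^ p) ∂μ := by
        refine setLIntegral_mono' hK fun y hy => ENNReal.ofReal_le_ofReal ?_
        obtain ⟨hpos, hle⟩ := hxK y hy
        rw [hvK y hy, sub_zero]
        exact div_le_div_of_nonneg_left (sq_nonneg _) (rpow_pos_of_pos hpos p)
          (rpow_le_rpow (norm_nonneg _) hle hp)
    _ ≤ _ := setLIntegral_le_lintegral _ _

theorem fractional_poincare_general (n : ℕ) (hn : 1 ≤ n) (s : ℝ) (hs : s ∈ Set.Ioo (0:ℝ) 1)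
    (Ω : Set (EuclideanSpace ℝ (Fin n))) (hΩb : Bornology.IsBounded Ω) :
    ∃ c : ℝ, 0 < c ∧
      ∀ v : EuclideanSpace ℝ (Fin n) → ℝ,
        MemLp v 2 volume → Function.support v ⊆ closure Ω →
        eLpNorm v 2 volume ≤
          ENNReal.ofReal c *
            (∫⁻ x, ∫⁻ y, ENNReal.ofReal ((v x - v y) ^ 2 / ‖x - y‖ ^ ((n : ℝ) + 2 * s))) ^
              (1 / 2 : ℝ) := by
  obtain ⟨R, hR, hΩR⟩ := hΩb.closure.subset_ball_lt 0 0
  have : Nonempty (Fin n) := ⟨⟨0, hn⟩⟩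
  obtain ⟨z, hz⟩ := exists_closedBall_subset_shell (E := EuclideanSpace ℝ (Fin n)) hR
  set k := ENNReal.ofReal ((4 * R) ^ ((n : ℝ) + 2 * s))⁻¹ * volume (Metric.closedBall z R)
  have hk0 : k ≠ 0 := mul_ne_zero (by simp only [ne_eq, ENNReal.ofReal_eq_zero, not_le]; positivity)
    (Metric.measure_closedBall_pos _ _ hR).ne'
  have hkt : k ≠ ⊤ := ENNReal.mul_ne_top ENNReal.ofReal_ne_top measure_closedBall_lt_top.ne
  refine ⟨_, rpow_pos_of_pos (ENNReal.toReal_pos (ENNReal.inv_ne_zero.2 hkt)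
    (ENNReal.inv_ne_top.2 hk0)) _, fun v _ hsupp => eLpNorm_two_le_of_mul_lintegral_sq_le hk0 hkt ?_⟩
  rw [← lintegral_const_mul' _ _ hkt]
  refine lintegral_mono fun x => ?_
  by_cases hvx : v x = 0
  · simp [hvx]
  have hx : ‖x‖ < R := mem_ball_zero_iff.1 (hΩR (hsupp hvx))
  refine mul_sq_le_lintegral_sq_div_rpow _ (by linarith [hs.1]) measurableSet_closedBall
    (fun y hy => Function.notMem_support.1 fun hy' => ?_) (fun y hy => ?_)
  · linarith [(hz y hy).1, mem_ball_zero_iff.1 (hΩR (hsupp hy'))]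
  · constructor <;> linarith [hz y hy, norm_sub_norm_le y x, norm_sub_rev x y, norm_sub_le x y]

/-- **Fractional Poincaré inequality.** For a bounded open set `Ω ⊆ ℝⁿ` and `s ∈ (0,1)`,
there is a constant `c > 0` such that `‖v‖_{L²(ℝⁿ)} ≤ c |v|_{H^s(ℝⁿ)}` for every
`v ∈ L²(ℝⁿ)` supported in the closure of `Ω`. -/
theorem fractional_poincare (n : ℕ) (hn : 1 ≤ n) (s : ℝ) (hs : s ∈ Set.Ioo (0:ℝ) 1)
    (Ω : Set (EuclideanSpace ℝ (Fin n))) (hΩo : IsOpen Ω) (hΩb : Bornology.IsBounded Ω) :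
    ∃ c : ℝ, 0 < c ∧
      ∀ v : EuclideanSpace ℝ (Fin n) → ℝ,
        MemLp v 2 volume → Function.support v ⊆ closure Ω →
        eLpNorm v 2 volume ≤
          ENNReal.ofReal c *
            (∫⁻ x, ∫⁻ y, ENNReal.ofReal ((v x - v y) ^ 2 / ‖x - y‖ ^ ((n : ℝ) + 2 * s))) ^
              (1 / 2 : ℝ) :=
  fractional_poincare_general n hn s hs Ω hΩb
end

section
/- Let s ∈ (0,1), R > 0, and let x = (x₁, 0) ∈ ℝ² with 0 ≤ x₁ < R. Then the integral ψ(x) = ∫_{ℝ² ∖ B(0,R)} |x−y|^{−(2+2s)} dy is finite and ψ(x) = (1/(2s)) ∫₀^{2π} ρ₀(θ, x)^{−2s} dθ, where ρ₀(θ, x) = −x₁ cos θ + √(R² − x₁² sin² θ). -/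
open MeasureTheory Real Filter Set

/-- The point `(a, b) ∈ ℝ²` (with the Euclidean norm). -/
noncomputable def e2 (a b : ℝ) : EuclideanSpace ℝ (Fin 2) :=
  (WithLp.equiv 2 (Fin 2 → ℝ)).symm ![a, b]

/-!
Identify `ℝ²` isometrically with `ℂ` and translate by `x = x₁`. In polar coordinates `z = r e^{iθ}`
the exterior of the disc becomes `{r ≥ ρ₀(θ)}`, because `|x₁ + r e^{iθ}|² - R²` is a quadratic in
`r` with roots `ρ₀(θ)` and `-x₁ cos θ - √(R² - x₁² sin² θ) < 0`. With the Jacobian `r`, the radial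
integral is `∫_{ρ₀(θ)}^∞ r^{-1-2s} dr = ρ₀(θ)^{-2s} / (2s)`. The computation is carried out for the
lower Lebesgue integral, so finiteness and the value come out together.
-/

open scoped ENNReal

theorem integrableOn_and_setIntegral_eq_of_lintegral_eq_ofReal {α : Type*} [MeasurableSpace α]
    {μ : Measure α} {s : Set α} {f : α → ℝ} {c : ℝ} (hf : AEStronglyMeasurable f (μ.restrict s))
    (hf_nonneg : ∀ x, 0 ≤ f x) (hc : 0 ≤ c)
    (h : ∫⁻ x in s, ENNReal.ofReal (f x) ∂μ = ENNReal.ofReal c) :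
    IntegrableOn f s μ ∧ ∫ x in s, f x ∂μ = c := by
  have hf_nonneg' : 0 ≤ᵐ[μ.restrict s] f := Eventually.of_forall hf_nonneg
  refine ⟨⟨hf, ?_⟩, ?_⟩
  · rw [hasFiniteIntegral_iff_ofReal hf_nonneg', h]
    exact ENNReal.ofReal_lt_top
  · rw [integral_eq_lintegral_of_nonneg_ae hf_nonneg' hf, h, ENNReal.toReal_ofReal hc]

theorem lintegral_Ioo_ofReal_eq_intervalIntegral {g : ℝ → ℝ} {a b : ℝ} (hab : a ≤ b)
    (hg : ContinuousOn g (Icc a b)) (hg_nonneg : ∀ x ∈ Ioo a b, 0 ≤ g x) :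
    ∫⁻ x in Ioo a b, ENNReal.ofReal (g x) = ENNReal.ofReal (∫ x in a..b, g x) := by
  rw [intervalIntegral.integral_of_le hab, integral_Ioc_eq_integral_Ioo,
    ofReal_integral_eq_lintegral_ofReal ((hg.integrableOn_Icc).mono_set Ioo_subset_Icc_self)]
  exact (ae_restrict_mem measurableSet_Ioo).mono hg_nonneg

theorem lintegral_Ioi_rpow_of_lt {a : ℝ} (ha : a < -1) {c : ℝ} (hc : 0 < c) :
    ∫⁻ t in Ioi c, ENNReal.ofReal (t ^ a) = ENNReal.ofReal (-c ^ (a + 1) / (a + 1)) := by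
  rw [← integral_Ioi_rpow_of_lt ha hc, ofReal_integral_eq_lintegral_ofReal
    (integrableOn_Ioi_rpow_of_lt ha hc)]
  filter_upwards [ae_restrict_mem measurableSet_Ioi] with t ht
  exact rpow_nonneg (hc.trans ht).le a

theorem setLIntegral_Ioi_indicator_Ici_rpow {a c : ℝ} (ha : 0 < a) (hc : 0 < c) :
    ∫⁻ r in Ioi 0, (Ici c).indicator (fun r ↦ ENNReal.ofReal (r ^ (-(1 + a)))) r =
      ENNReal.ofReal (c ^ (-a) / a) := by
  have hexp : -(1 + a) < -1 := by linarith
  rw [lintegral_indicator measurableSet_Ici, Measure.restrict_restrict measurableSet_Ici,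
    inter_eq_left.mpr (Ici_subset_Ioi.mpr hc), setLIntegral_congr Ioi_ae_eq_Ici.symm,
    lintegral_Ioi_rpow_of_lt hexp hc]
  congr 1
  rw [show -(1 + a) + 1 = -a by ring, neg_div_neg_eq]

theorem LinearIsometryEquiv.setLIntegral_compl_ball_norm_sub {E F : Type*} [NormedAddCommGroup E]
    [InnerProductSpace ℝ E] [FiniteDimensional ℝ E] [MeasurableSpace E] [BorelSpace E]
    [NormedAddCommGroup F] [InnerProductSpace ℝ F] [FiniteDimensional ℝ F] [MeasurableSpace F]
    [BorelSpace F] (e : E ≃ₗᵢ[ℝ] F) (f : ℝ → ℝ≥0∞) (x : E) (R : ℝ) :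
    ∫⁻ y in (Metric.ball (0 : F) R)ᶜ, f ‖e x - y‖ =
      ∫⁻ z in (Metric.ball (0 : E) R)ᶜ, f ‖x - z‖ := by
  have hball : e ⁻¹' (Metric.ball 0 R)ᶜ = (Metric.ball 0 R)ᶜ := by
    ext z; simp
  rw [← e.measurePreserving.setLIntegral_comp_preimage_emb e.toHomeomorph.measurableEmbedding,
    hball]
  simp_rw [← map_sub, LinearIsometryEquiv.norm_map]

theorem setLIntegral_compl_ball_norm_sub_eq_setLIntegral_norm {E : Type*} [NormedAddCommGroup E]
    [MeasurableSpace E] [BorelSpace E] (μ : Measure E) [μ.IsAddLeftInvariant]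
    (f : ℝ → ℝ≥0∞) (x : E) (R : ℝ) :
    ∫⁻ y in (Metric.ball (0 : E) R)ᶜ, f ‖x - y‖ ∂μ = ∫⁻ z in {z | R ≤ ‖x + z‖}, f ‖z‖ ∂μ := by
  have hset : (x + ·) ⁻¹' (Metric.ball (0 : E) R)ᶜ = {z | R ≤ ‖x + z‖} := by
    ext z; simp only [mem_preimage, mem_compl_iff, Metric.mem_ball, dist_zero_right, not_lt,
      mem_ofPred_eq]
  rw [← (measurePreserving_add_left μ x).setLIntegral_comp_preimage_emb
    (measurableEmbedding_addLeft x), hset]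
  simp

theorem setLIntegral_compl_ball_norm_e2_sub (f : ℝ → ℝ≥0∞) (x₁ R : ℝ) :
    ∫⁻ y in (Metric.ball 0 R)ᶜ, f ‖e2 x₁ 0 - y‖ = ∫⁻ z in {z : ℂ | R ≤ ‖(x₁ : ℂ) + z‖}, f ‖z‖ := by
  have he2 : e2 x₁ 0 = Complex.orthonormalBasisOneI.repr (x₁ : ℂ) := by
    ext i; fin_cases i <;> simp [e2]
  rw [he2, LinearIsometryEquiv.setLIntegral_compl_ball_norm_sub,
    setLIntegral_compl_ball_norm_sub_eq_setLIntegral_norm]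

theorem Function.Periodic.intervalIntegral_neg_pi_pi {g : ℝ → ℝ} (hg : Periodic g (2 * π)) :
    ∫ θ in (-π)..π, g θ = ∫ θ in (0 : ℝ)..(2 * π), g θ := by
  simpa [show -π + 2 * π = π by ring] using hg.intervalIntegral_add_eq (-π) 0

-- The paper's `ρ₀(θ, x)` for `x = (x₁, 0)`: the distance from `x` to the circle of radius `R`
-- along the ray of angle `θ`.
noncomputable def rayDistToCircle (R x₁ θ : ℝ) : ℝ :=
  -x₁ * cos θ + √(R ^ 2 - x₁ ^ 2 * sin θ ^ 2)

section rayDistToCircle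

variable {R x₁ : ℝ}

theorem continuous_rayDistToCircle : Continuous (rayDistToCircle R x₁) := by
  unfold rayDistToCircle; fun_prop

theorem periodic_rayDistToCircle : Function.Periodic (rayDistToCircle R x₁) (2 * π) := by
  intro θ; simp [rayDistToCircle]

theorem abs_mul_cos_lt_sqrt (h : |x₁| < R) (θ : ℝ) :
    |x₁ * cos θ| < √(R ^ 2 - x₁ ^ 2 * sin θ ^ 2) := by
  apply lt_sqrt_of_sq_lt
  have hx : x₁ ^ 2 < R ^ 2 := sq_lt_sq' (abs_lt.1 h).1 (abs_lt.1 h).2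
  nlinarith [sq_abs (x₁ * cos θ), sin_sq_add_cos_sq θ]

theorem rayDistToCircle_pos (h : |x₁| < R) (θ : ℝ) : 0 < rayDistToCircle R x₁ θ := by
  unfold rayDistToCircle
  linarith [abs_mul_cos_lt_sqrt h θ, le_abs_self (x₁ * cos θ)]

theorem le_norm_add_polarCoord_symm_iff (h : |x₁| < R) {r : ℝ} (hr : 0 < r) (θ : ℝ) :
    R ≤ ‖(x₁ : ℂ) + r * (cos θ + sin θ * Complex.I)‖ ↔ rayDistToCircle R x₁ θ ≤ r := by
  set w := √(R ^ 2 - x₁ ^ 2 * sin θ ^ 2)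
  have hw : w ^ 2 = R ^ 2 - x₁ ^ 2 * sin θ ^ 2 :=
    sq_sqrt (by nlinarith [sin_sq_le_one θ, sq_abs x₁, abs_nonneg x₁])
  have hpos : 0 < r + w + x₁ * cos θ := by
    linarith [abs_mul_cos_lt_sqrt h θ, neg_abs_le (x₁ * cos θ)]
  have hfactor : ‖(x₁ : ℂ) + r * (cos θ + sin θ * Complex.I)‖ ^ 2 - R ^ 2 =
      (r - rayDistToCircle R x₁ θ) * (r + w + x₁ * cos θ) := by
    rw [Complex.sq_norm, Complex.normSq_apply]
    simp only [Complex.add_re, Complex.ofReal_re, Complex.mul_re, Complex.I_re, mul_zero,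
      Complex.ofReal_im, Complex.I_im, mul_one, sub_self, add_zero, Complex.add_im, Complex.mul_im,
      zero_add, zero_mul, sub_zero, rayDistToCircle, neg_mul]
    linear_combination (r ^ 2 - x₁ ^ 2) * sin_sq_add_cos_sq θ + hw
  rw [← pow_le_pow_iff_left₀ ((abs_nonneg x₁).trans h.le) (norm_nonneg _) two_ne_zero,
    ← sub_nonneg, hfactor, mul_nonneg_iff_of_pos_right hpos, sub_nonneg]

end rayDistToCircle

theorem ofReal_smul_indicator_polarCoord_symm_eq {ρ : ℝ → ℝ} {a : ℝ} {T : Set ℂ}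
    (hmem : ∀ r, 0 < r → ∀ θ, ↑r * (↑(cos θ) + ↑(sin θ) * Complex.I) ∈ T ↔ ρ θ ≤ r)
    {p : ℝ × ℝ} (hp : 0 < p.1) :
    ENNReal.ofReal p.1 • T.indicator (fun z ↦ ENNReal.ofReal (‖z‖ ^ (-(2 + a))))
        (Complex.polarCoord.symm p) =
      {q : ℝ × ℝ | ρ q.2 ≤ q.1}.indicator (fun q ↦ ENNReal.ofReal (q.1 ^ (-(1 + a)))) p := by
  obtain ⟨r, θ⟩ := p
  have hT : Complex.polarCoord.symm (r, θ) ∈ T ↔ ρ θ ≤ r := by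
    rw [Complex.polarCoord_symm_apply]; exact hmem r hp θ
  by_cases h : ρ θ ≤ r
  · rw [indicator_of_mem (hT.2 h), indicator_of_mem (s := {q : ℝ × ℝ | ρ q.2 ≤ q.1}) h,
      Complex.norm_polarCoord_symm, abs_of_pos hp, smul_eq_mul, ← ENNReal.ofReal_mul hp.le,
      show -(1 + a) = 1 + -(2 + a) by ring, rpow_add hp, rpow_one]
  · rw [indicator_of_notMem (mt hT.1 h), indicator_of_notMem (s := {q : ℝ × ℝ | ρ q.2 ≤ q.1}) h,
      smul_zero]

theorem setLIntegral_norm_rpow_eq_of_polar {ρ : ℝ → ℝ} (hρ : Measurable ρ)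
    (hρ_pos : ∀ θ, 0 < ρ θ) {a : ℝ} (ha : 0 < a) {T : Set ℂ} (hT : MeasurableSet T)
    (hmem : ∀ r, 0 < r → ∀ θ, ↑r * (↑(cos θ) + ↑(sin θ) * Complex.I) ∈ T ↔ ρ θ ≤ r) :
    ∫⁻ z in T, ENNReal.ofReal (‖z‖ ^ (-(2 + a))) =
      ∫⁻ θ in Ioo (-π) π, ENNReal.ofReal (ρ θ ^ (-a) / a) := by
  have hK : MeasurableSet {q : ℝ × ℝ | ρ q.2 ≤ q.1} :=
    measurableSet_le (hρ.comp measurable_snd) measurable_fst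
  calc ∫⁻ z in T, ENNReal.ofReal (‖z‖ ^ (-(2 + a)))
      = ∫⁻ p in polarCoord.target, ENNReal.ofReal p.1 •
          T.indicator (fun z ↦ ENNReal.ofReal (‖z‖ ^ (-(2 + a)))) (Complex.polarCoord.symm p) := by
        rw [← lintegral_indicator hT, Complex.lintegral_comp_polarCoord_symm]
    _ = ∫⁻ p in polarCoord.target,
          {q : ℝ × ℝ | ρ q.2 ≤ q.1}.indicator (fun q ↦ ENNReal.ofReal (q.1 ^ (-(1 + a)))) p :=
        setLIntegral_congr_fun polarCoord.open_target.measurableSet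
          fun p hp ↦ ofReal_smul_indicator_polarCoord_symm_eq hmem hp.1
    _ = ∫⁻ θ in Ioo (-π) π, ∫⁻ r in Ioi 0,
          (Ici (ρ θ)).indicator (fun r ↦ ENNReal.ofReal (r ^ (-(1 + a)))) r := by
        rw [polarCoord_target, Measure.volume_eq_prod, ← Measure.prod_restrict]
        exact lintegral_prod_symm _ ((by fun_prop : Measurable fun q : ℝ × ℝ ↦
          ENNReal.ofReal (q.1 ^ (-(1 + a)))).indicator hK).aemeasurable
    _ = ∫⁻ θ in Ioo (-π) π, ENNReal.ofReal (ρ θ ^ (-a) / a) :=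
        lintegral_congr fun θ ↦ setLIntegral_Ioi_indicator_Ici_rpow ha (hρ_pos θ)

theorem complement_integral_polar_general (s R x₁ : ℝ) (hs : s ∈ Set.Ioo (0:ℝ) 1)
    (hx₁ : 0 ≤ x₁) (hx₁R : x₁ < R) :
    IntegrableOn (fun y : EuclideanSpace ℝ (Fin 2) => ‖e2 x₁ 0 - y‖ ^ (-(2 + 2 * s)))
        (Metric.ball (0 : EuclideanSpace ℝ (Fin 2)) R)ᶜ volume ∧
    ∫ y in (Metric.ball (0 : EuclideanSpace ℝ (Fin 2)) R)ᶜ,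
        ‖e2 x₁ 0 - y‖ ^ (-(2 + 2 * s)) =
      (1 / (2 * s)) *
        ∫ θ in (0 : ℝ)..(2 * Real.pi),
          (-x₁ * Real.cos θ + Real.sqrt (R ^ 2 - x₁ ^ 2 * Real.sin θ ^ 2)) ^ (-(2 * s)) := by
  have hx : |x₁| < R := by rwa [abs_of_nonneg hx₁]
  have hs₂ : 0 < 2 * s := by linarith [hs.1]
  have hρ := rayDistToCircle_pos hx
  refine integrableOn_and_setIntegral_eq_of_lintegral_eq_ofReal
    (by fun_prop : Measurable fun y : EuclideanSpace ℝ (Fin 2) ↦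
      ‖e2 x₁ 0 - y‖ ^ (-(2 + 2 * s))).aestronglyMeasurable
    (fun y ↦ rpow_nonneg (norm_nonneg _) _)
    (mul_nonneg (by positivity) (intervalIntegral.integral_nonneg two_pi_pos.le
      fun θ _ ↦ rpow_nonneg (hρ θ).le _)) ?_
  calc ∫⁻ y in (Metric.ball 0 R)ᶜ, ENNReal.ofReal (‖e2 x₁ 0 - y‖ ^ (-(2 + 2 * s)))
      = ∫⁻ z in {z : ℂ | R ≤ ‖(x₁ : ℂ) + z‖}, ENNReal.ofReal (‖z‖ ^ (-(2 + 2 * s))) :=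
        setLIntegral_compl_ball_norm_e2_sub (fun t ↦ ENNReal.ofReal (t ^ (-(2 + 2 * s)))) x₁ R
    _ = ∫⁻ θ in Ioo (-π) π, ENNReal.ofReal (rayDistToCircle R x₁ θ ^ (-(2 * s)) / (2 * s)) :=
        setLIntegral_norm_rpow_eq_of_polar continuous_rayDistToCircle.measurable hρ hs₂
          (measurableSet_le measurable_const (by fun_prop))
          fun r hr θ ↦ le_norm_add_polarCoord_symm_iff hx hr θ
    _ = ENNReal.ofReal (∫ θ in (-π)..π, rayDistToCircle R x₁ θ ^ (-(2 * s)) / (2 * s)) :=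
        lintegral_Ioo_ofReal_eq_intervalIntegral (by linarith [pi_pos])
          ((continuous_rayDistToCircle.rpow_const fun θ ↦ Or.inl (hρ θ).ne').div_const
            _).continuousOn
          fun θ _ ↦ div_nonneg (rpow_nonneg (hρ θ).le _) hs₂.le
    _ = _ := by
        rw [intervalIntegral.integral_div, one_div_mul_eq_div,
          Function.Periodic.intervalIntegral_neg_pi_pi
            (g := fun θ ↦ rayDistToCircle R x₁ θ ^ (-(2 * s)))
            (periodic_rayDistToCircle.comp (· ^ (-(2 * s))))]
        rfl

/-- **Polar computation of the complement integral.** For `x = (x₁,0)` with `0 ≤ x₁ < R`,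
the integral `ψ(x) = ∫_{ℝ²∖B(0,R)} |x−y|^{−(2+2s)} dy` is finite and equals
`(1/(2s)) ∫₀^{2π} ρ₀(θ,x)^{−2s} dθ` with `ρ₀(θ,x) = −x₁ cos θ + √(R²−x₁² sin²θ)`. -/
theorem complement_integral_polar (s R x₁ : ℝ) (hs : s ∈ Set.Ioo (0:ℝ) 1) (hR : 0 < R)
    (hx₁ : 0 ≤ x₁) (hx₁R : x₁ < R) :
    IntegrableOn (fun y : EuclideanSpace ℝ (Fin 2) => ‖e2 x₁ 0 - y‖ ^ (-(2 + 2 * s)))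
        (Metric.ball (0 : EuclideanSpace ℝ (Fin 2)) R)ᶜ volume ∧
    ∫ y in (Metric.ball (0 : EuclideanSpace ℝ (Fin 2)) R)ᶜ,
        ‖e2 x₁ 0 - y‖ ^ (-(2 + 2 * s)) =
      (1 / (2 * s)) *
        ∫ θ in (0 : ℝ)..(2 * Real.pi),
          (-x₁ * Real.cos θ + Real.sqrt (R ^ 2 - x₁ ^ 2 * Real.sin θ ^ 2)) ^ (-(2 * s)) :=
  complement_integral_polar_general s R x₁ hs hx₁ hx₁R
end

section
/- Let s ∈ (0,1), let B_ℓ and B_m be invertible 2×2 real matrices and p ∈ ℝ², and set χ_ℓ(x̂) = B_ℓ x̂ + p, χ_m(x̂) = B_m x̂ + p, T_ℓ = χ_ℓ(T̂), T_m = χ_m(T̂). Assume the closed triangles T_ℓ and T_m intersect exactly in the single point {p}. For x̂, ŷ ∈ T̂ define Φ₁ = φ̂₁(x̂)−φ̂₁(ŷ), Φ₂ = φ̂₂(x̂), Φ₃ = φ̂₃(x̂), Φ₄ = −φ̂₂(ŷ), Φ₅ = −φ̂₃(ŷ). Define, for η = (η₁,η₂,η₃) ∈ [0,1]³: ψ⁽¹⁾(η)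 = (η₂−1, 1−η₁, η₁, −η₂(1−η₃), −η₂η₃), ψ⁽²⁾(η) = (1−η₂, η₂(1−η₃), η₂η₃, η₁−1, −η₁), d⁽¹⁾(η) = B_ℓ(1, η₁) − B_m(η₂, η₂η₃), d⁽²⁾(η) = B_ℓ(η₂, η₂η₃) − B_m(1, η₁). Then for all i, j ∈ {1,…,5}: ∬_{T̂×T̂} Φ_i(x̂,ŷ) Φ_j(x̂,ŷ) / |χ_ℓ(x̂)−χ_m(ŷ)|^{2+2s} dx̂ dŷ = (1/(4−2s)) [ ∫_{[0,1]³} ψ⁽¹⁾_i(η)ψ⁽¹⁾_j(η) η₂ / |d⁽¹⁾(η)|^{2+2s} dη + ∫_{[0,1]³} ψ⁽²⁾_i(η)ψ⁽²⁾_j(η) η₂ / |d⁽²⁾(η)|^{2+2s} dη ], and both sides are finite. (Equivalently, the element-pair integral I_{ℓ,m}^{i,j} for two triangles sharing exactly a vertex equals 4|T_ℓ||T_m| times the left-hand side.) -/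
open MeasureTheory Real Filter Set

/-- The reference triangle `T̂ = {(x̂₁, x̂₂) : 0 ≤ x̂₂ ≤ x̂₁ ≤ 1} ⊂ ℝ²`. -/
def refTriangle : Set (EuclideanSpace ℝ (Fin 2)) :=
  {x | 0 ≤ x 1 ∧ x 1 ≤ x 0 ∧ x 0 ≤ 1}

/-- The nodal basis functions `φ̂₁(x̂)=1−x̂₁`, `φ̂₂(x̂)=x̂₁−x̂₂`, `φ̂₃(x̂)=x̂₂` on `T̂`. -/
noncomputable def refBasis (i : Fin 3) (x : EuclideanSpace ℝ (Fin 2)) : ℝ :=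
  ![1 - x 0, x 0 - x 1, x 1] i

/-- The five local shape-function differences for a pair of vertex-touching triangles:
`Φ₁ = φ̂₁(x̂)−φ̂₁(ŷ)`, `Φ₂ = φ̂₂(x̂)`, `Φ₃ = φ̂₃(x̂)`, `Φ₄ = −φ̂₂(ŷ)`, `Φ₅ = −φ̂₃(ŷ)`. -/
noncomputable def phiVertex (i : Fin 5) (x y : EuclideanSpace ℝ (Fin 2)) : ℝ :=
  ![refBasis 0 x - refBasis 0 y, refBasis 1 x, refBasis 2 x,
    -refBasis 1 y, -refBasis 2 y] i

/-- `ψ⁽¹⁾(η) = (η₂−1, 1−η₁, η₁, −η₂(1−η₃), −η₂η₃)`. -/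
noncomputable def psiVertex1 (i : Fin 5) (η : Fin 3 → ℝ) : ℝ :=
  ![η 1 - 1, 1 - η 0, η 0, -(η 1 * (1 - η 2)), -(η 1 * η 2)] i

/-- `ψ⁽²⁾(η) = (1−η₂, η₂(1−η₃), η₂η₃, η₁−1, −η₁)`. -/
noncomputable def psiVertex2 (i : Fin 5) (η : Fin 3 → ℝ) : ℝ :=
  ![1 - η 1, η 1 * (1 - η 2), η 1 * η 2, η 0 - 1, -(η 0)] i

/-!
Up to a null set, `T̂ × T̂` splits into the region where `x̂₁ > ŷ₁` and its mirror image under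
`(x̂, ŷ) ↦ (ŷ, x̂)`. On the first region the Duffy substitution
`(x̂, ŷ) = ξ • ((1, η₁), (η₂, η₂η₃))`, `ξ, η ∈ (0,1)`, has Jacobian `ξ³η₂`. Because the `Φ`'s and
`χ_ℓ(x̂) − χ_m(ŷ) = B_ℓx̂ − B_mŷ` are linear in `(x̂, ŷ)`, the integrand is positively
homogeneous of degree `−2s`, so it factors as `ξ^(−2s)` times its value at `ξ = 1`, and the
`ξ`-integral contributes `∫₀¹ ξ^(3−2s) dξ = 1/(4−2s)`. The mirror region gives the `ψ⁽²⁾` term.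
Finiteness: since `T_ℓ ∩ T_m = {p}`, `B_ℓu = B_mv` with `u, v ∈ T̂` forces `u = v = 0`, so the
`η`-integrands have denominators bounded away from `0` on `[0,1]³` and are continuous there.
-/

namespace VertexTouching

def openCube (n : ℕ) : Set (Fin n → ℝ) := univ.pi fun _ => Ioo 0 1

lemma mem_openCube {n : ℕ} {a : Fin n → ℝ} : a ∈ openCube n ↔ ∀ k, 0 < a k ∧ a k < 1 := by
  simp [openCube]

lemma openCube_ae_eq_Icc (n : ℕ) : openCube n =ᵐ[volume] Icc (0 : Fin n → ℝ) 1 := by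
  rw [volume_pi]
  exact Measure.univ_pi_Ioo_ae_eq_Icc

lemma preimage_piFinSuccAbove_zero_openCube (n : ℕ) :
    MeasurableEquiv.piFinSuccAbove (fun _ => ℝ) 0 ⁻¹' (Ioo 0 1 ×ˢ openCube n) =
      openCube (n + 1) := by
  ext a
  simp [mem_openCube, Fin.forall_fin_succ, Fin.tail]

lemma integrableOn_openCube_rpow_mul_tail {n : ℕ} {κ : ℝ} (hκ : -1 < κ)
    {G : (Fin n → ℝ) → ℝ} (hG : IntegrableOn G (Icc 0 1)) :
    IntegrableOn (fun a : Fin (n + 1) → ℝ => a 0 ^ κ * G (Fin.tail a)) (openCube (n + 1)) ∧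
      ∫ a in openCube (n + 1), a 0 ^ κ * G (Fin.tail a) =
        (κ + 1)⁻¹ * ∫ η in Icc 0 1, G η := by
  set e := MeasurableEquiv.piFinSuccAbove (fun _ : Fin (n + 1) => ℝ) 0
  have he : MeasurePreserving e (volume : Measure (Fin (n + 1) → ℝ))
      ((volume : Measure ℝ).prod (volume : Measure (Fin n → ℝ))) :=
    volume_preserving_piFinSuccAbove _ 0
  set f : ℝ × (Fin n → ℝ) → ℝ := fun z => z.1 ^ κ * G z.2
  have hfe : (fun a : Fin (n + 1) → ℝ => a 0 ^ κ * G (Fin.tail a)) = f ∘ e := by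
    ext a
    simp [f, e]
  have hpow : IntegrableOn (fun x : ℝ => x ^ κ) (Ioo 0 1) :=
    (intervalIntegral.intervalIntegrable_rpow' hκ).1.mono_set Ioo_subset_Ioc_self
  have hGcube : IntegrableOn G (openCube n) := hG.congr_set_ae (openCube_ae_eq_Icc n)
  rw [← preimage_piFinSuccAbove_zero_openCube, hfe]
  constructor
  · rw [he.integrableOn_comp_preimage e.measurableEmbedding, IntegrableOn,
      ← Measure.prod_restrict]
    exact hpow.mul_prod hGcube
  · rw [Function.comp_def, he.setIntegral_preimage_emb e.measurableEmbedding,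
      ← Measure.prod_restrict, integral_prod_mul (fun x : ℝ => x ^ κ) G,
      setIntegral_congr_set (openCube_ae_eq_Icc n), ← integral_Ioc_eq_integral_Ioo,
      ← intervalIntegral.integral_of_le zero_le_one, integral_rpow (Or.inl hκ)]
    simp [Real.zero_rpow (by linarith : κ + 1 ≠ 0)]

def duffy (a : Fin 4 → ℝ) : Fin 4 → ℝ := ![a 0, a 0 * a 1, a 0 * a 2, a 0 * a 2 * a 3]

def duffyJacobian (a : Fin 4 → ℝ) : Matrix (Fin 4) (Fin 4) ℝ :=
  !![1, 0, 0, 0; a 1, a 0, 0, 0; a 2, 0, a 0, 0; a 2 * a 3, 0, a 0 * a 3, a 0 * a 2]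

noncomputable def duffyDeriv (a : Fin 4 → ℝ) : (Fin 4 → ℝ) →L[ℝ] Fin 4 → ℝ :=
  (Matrix.toLin' (duffyJacobian a)).toContinuousLinearMap

lemma det_duffyDeriv (a : Fin 4 → ℝ) : (duffyDeriv a).det = a 0 ^ 3 * a 2 := by
  rw [duffyDeriv, ContinuousLinearMap.det, LinearMap.coe_toContinuousLinearMap,
    LinearMap.det_toLin', Matrix.det_succ_row_zero]
  simp [Fin.sum_univ_succ, Matrix.det_fin_three, duffyJacobian, Fin.succAbove, pow_succ, mul_assoc]

lemma hasFDerivAt_duffy (a : Fin 4 → ℝ) : HasFDerivAt duffy (duffyDeriv a) a := by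
  refine hasFDerivAt_pi'' fun i => ?_
  have hc (k : Fin 4) := hasFDerivAt_apply (𝕜 := ℝ) k a
  fin_cases i
  on_goal 1 => refine (hc 0).congr_fderiv ?_
  on_goal 2 => refine ((hc 0).mul (hc 1)).congr_fderiv ?_
  on_goal 3 => refine ((hc 0).mul (hc 2)).congr_fderiv ?_
  on_goal 4 => refine (((hc 0).mul (hc 2)).mul (hc 3)).congr_fderiv ?_
  all_goals ext x; simp [duffyDeriv, duffyJacobian, dotProduct, Fin.sum_univ_succ] <;> ring

/-- In the coordinates `(x̂, ŷ) = ((b₀, b₁), (b₂, b₃))`: the interior of `T̂ × T̂` cut by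
`ŷ₁ < x̂₁`. -/
def sector : Set (Fin 4 → ℝ) :=
  {b | 0 < b 1 ∧ b 1 < b 0 ∧ b 0 < 1 ∧ 0 < b 3 ∧ b 3 < b 2 ∧ b 2 < b 0}

lemma injOn_duffy : InjOn duffy (openCube 4) := by
  intro a ha a' _ h
  have ha0 : a 0 ≠ 0 := (mem_openCube.1 ha 0).1.ne'
  have ha2 : a 2 ≠ 0 := (mem_openCube.1 ha 2).1.ne'
  obtain ⟨h0, h1, h2, h3⟩ : a 0 = a' 0 ∧ a 0 * a 1 = a' 0 * a' 1 ∧ a 0 * a 2 = a' 0 * a' 2 ∧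
      a 0 * a 2 * a 3 = a' 0 * a' 2 * a' 3 :=
    ⟨congrFun h 0, congrFun h 1, congrFun h 2, congrFun h 3⟩
  rw [← h0] at h1 h2 h3
  have h2' : a 2 = a' 2 := mul_left_cancel₀ ha0 h2
  rw [← h2'] at h3
  funext k
  fin_cases k
  exacts [h0, mul_left_cancel₀ ha0 h1, h2', mul_left_cancel₀ (mul_ne_zero ha0 ha2) h3]

lemma image_duffy_openCube : duffy '' openCube 4 = sector := by
  ext b
  constructor
  · rintro ⟨a, ha, rfl⟩
    have h := mem_openCube.1 ha
    have h0 := h 0; have h1 := h 1; have h2 := h 2; have h3 := h 3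
    refine ⟨mul_pos h0.1 h1.1, mul_lt_of_lt_one_right h0.1 h1.2, h0.2,
      mul_pos (mul_pos h0.1 h2.1) h3.1, mul_lt_of_lt_one_right (mul_pos h0.1 h2.1) h3.2,
      mul_lt_of_lt_one_right h0.1 h2.2⟩
  · rintro ⟨hb1, hb10, hb01, hb3, hb32, hb20⟩
    have hb0 : 0 < b 0 := hb1.trans hb10
    have hb2 : 0 < b 2 := hb3.trans hb32
    refine ⟨![b 0, b 1 / b 0, b 2 / b 0, b 3 / b 2], mem_openCube.2 fun k => ?_, ?_⟩
    · fin_cases k <;> simp [div_lt_one, *]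
    · funext k
      fin_cases k <;> simp [duffy, mul_div_cancel₀, hb0.ne', hb2.ne']

theorem integrableOn_sector_and_integral_eq {κ : ℝ} (hκ : -4 < κ) {F : (Fin 4 → ℝ) → ℝ}
    {G : (Fin 3 → ℝ) → ℝ} (hG : IntegrableOn (fun η => G η * η 1) (Icc 0 1))
    (hF : ∀ a ∈ openCube 4, F (duffy a) = a 0 ^ κ * G (Fin.tail a)) :
    IntegrableOn F sector ∧ ∫ b in sector, F b = (κ + 4)⁻¹ * ∫ η in Icc 0 1, G η * η 1 := by
  have hmeas : MeasurableSet (openCube 4) := MeasurableSet.univ_pi fun _ => measurableSet_Ioo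
  have hderiv : ∀ a ∈ openCube 4, HasFDerivWithinAt duffy (duffyDeriv a) (openCube 4) a :=
    fun a _ => (hasFDerivAt_duffy a).hasFDerivWithinAt
  have hjac : ∀ a ∈ openCube 4, |(duffyDeriv a).det| • F (duffy a) =
      a 0 ^ (κ + 3) * (G (Fin.tail a) * Fin.tail a 1) := by
    intro a ha
    have h0 := (mem_openCube.1 ha 0).1
    have h2 := (mem_openCube.1 ha 2).1
    rw [det_duffyDeriv, abs_of_pos (by positivity), hF a ha, smul_eq_mul,
      rpow_add h0, rpow_ofNat, show Fin.tail a 1 = a 2 from rfl]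
    ring
  obtain ⟨hint, hval⟩ := integrableOn_openCube_rpow_mul_tail (by linarith : -1 < κ + 3) hG
  rw [← image_duffy_openCube,
    integrableOn_image_iff_integrableOn_abs_det_fderiv_smul volume hmeas hderiv injOn_duffy,
    integral_image_eq_integral_abs_det_fderiv_smul volume hmeas hderiv injOn_duffy,
    setIntegral_congr_fun hmeas hjac, hval]
  exact ⟨hint.congr_fun (fun a ha => (hjac a ha).symm) hmeas, by ring⟩

local notation "E" => EuclideanSpace ℝ (Fin 2)

lemma e2_apply (a b : ℝ) (k : Fin 2) : e2 a b k = ![a, b] k := rfl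

lemma smul_e2 (t a b : ℝ) : t • e2 a b = e2 (t * a) (t * b) := by
  ext k
  fin_cases k <;> simp [e2_apply]

noncomputable def pairEquiv : (Fin 4 → ℝ) ≃ᵐ E × E :=
  ((MeasurableEquiv.piCongrLeft (fun _ => ℝ) finSumFinEquiv).symm.trans
    (MeasurableEquiv.sumPiEquivProdPi fun _ : Fin 2 ⊕ Fin 2 => ℝ)).trans
    ((MeasurableEquiv.toLp 2 (Fin 2 → ℝ)).prodCongr (MeasurableEquiv.toLp 2 (Fin 2 → ℝ)))

lemma measurePreserving_pairEquiv : MeasurePreserving pairEquiv :=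
  ((EuclideanSpace.volume_preserving_symm_measurableEquiv_toLp (Fin 2)).symm.prod
    (EuclideanSpace.volume_preserving_symm_measurableEquiv_toLp (Fin 2)).symm).comp
    ((volume_measurePreserving_sumPiEquivProdPi _).comp
      (volume_measurePreserving_piCongrLeft _ finSumFinEquiv).symm)

lemma pairEquiv_apply (b : Fin 4 → ℝ) : pairEquiv b = (e2 (b 0) (b 1), e2 (b 2) (b 3)) := by
  ext k <;> fin_cases k <;> rfl

noncomputable def swapHalves : (Fin 4 → ℝ) ≃ᵐ (Fin 4 → ℝ) :=
  pairEquiv.trans (MeasurableEquiv.prodComm.trans pairEquiv.symm)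

lemma pairEquiv_swapHalves (b : Fin 4 → ℝ) : pairEquiv (swapHalves b) = (pairEquiv b).swap :=
  pairEquiv.apply_symm_apply _

lemma measurePreserving_swapHalves : MeasurePreserving swapHalves :=
  measurePreserving_pairEquiv.symm.comp
    ((Measure.measurePreserving_swap (μ := (volume : Measure E)) (ν := volume)).comp
      measurePreserving_pairEquiv)

lemma swapHalves_apply (b : Fin 4 → ℝ) : swapHalves b = ![b 2, b 3, b 0, b 1] := by
  apply pairEquiv.injective
  rw [pairEquiv_swapHalves, pairEquiv_apply, pairEquiv_apply]
  rfl

noncomputable def duffyPair (η : Fin 3 → ℝ) : E × E := (e2 1 (η 0), e2 (η 1) (η 1 * η 2))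

lemma pairEquiv_duffy (a : Fin 4 → ℝ) : pairEquiv (duffy a) = a 0 • duffyPair (Fin.tail a) := by
  simp only [pairEquiv_apply, duffyPair, Prod.smul_mk, smul_e2]
  simp [duffy, Fin.tail, mul_assoc]

lemma ae_apply_ne {n : ℕ} (i : Fin n) (r : ℝ) : ∀ᵐ x : Fin n → ℝ, x i ≠ r := by
  rw [ae_iff, volume_pi]
  simpa using Measure.pi_hyperplane (fun _ : Fin n => (volume : Measure ℝ)) i r

lemma ae_apply_ne_apply {n : ℕ} {i j : Fin n} (hij : i ≠ j) : ∀ᵐ x : Fin n → ℝ, x i ≠ x j := by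
  rw [ae_iff]
  let L : (Fin n → ℝ) →ₗ[ℝ] ℝ := (LinearMap.proj i : (Fin n → ℝ) →ₗ[ℝ] ℝ) - LinearMap.proj j
  have hL : {x : Fin n → ℝ | ¬x i ≠ x j} = LinearMap.ker L := by
    ext x
    simp [L, sub_eq_zero]
  rw [hL]
  refine Measure.addHaar_submodule _ _ fun htop => ?_
  have : Pi.single i 1 ∈ LinearMap.ker L := htop ▸ Submodule.mem_top
  simp [L, hij.symm] at this

lemma preimage_pairEquiv_refTriangle_prod_ae_eq :
    pairEquiv ⁻¹' (refTriangle ×ˢ refTriangle) =ᵐ[volume]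
      (sector ∪ swapHalves ⁻¹' sector : Set (Fin 4 → ℝ)) := by
  rw [Filter.eventuallyEq_set]
  filter_upwards [ae_apply_ne 1 0, ae_apply_ne_apply (show (1 : Fin 4) ≠ 0 by decide),
    ae_apply_ne 0 1, ae_apply_ne 3 0, ae_apply_ne_apply (show (3 : Fin 4) ≠ 2 by decide),
    ae_apply_ne 2 1, ae_apply_ne_apply (show (0 : Fin 4) ≠ 2 by decide)] with b h₁ h₂ h₃ h₄ h₅ h₆ h₇
  simp only [mem_preimage, mem_union, pairEquiv_apply, swapHalves_apply, sector, refTriangle,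
    mem_prod, mem_ofPred_eq, e2_apply, Matrix.cons_val_zero, Matrix.cons_val_one,
    Matrix.cons_val_two, Matrix.cons_val_three]
  constructor
  · rintro ⟨⟨h1, h2, h3⟩, h4, h5, h6⟩
    rcases h₇.lt_or_gt with h | h
    · right
      exact ⟨h4.lt_of_ne' h₄, h5.lt_of_ne h₅, h6.lt_of_ne h₆, h1.lt_of_ne' h₁, h2.lt_of_ne h₂, h⟩
    · left
      exact ⟨h1.lt_of_ne' h₁, h2.lt_of_ne h₂, h3.lt_of_ne h₃, h4.lt_of_ne' h₄, h5.lt_of_ne h₅, h⟩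
  · rintro (⟨h1, h2, h3, h4, h5, h6⟩ | ⟨h1, h2, h3, h4, h5, h6⟩)
    · exact ⟨⟨h1.le, h2.le, h3.le⟩, h4.le, h5.le, (h6.trans h3).le⟩
    · exact ⟨⟨h4.le, h5.le, (h6.trans h3).le⟩, h1.le, h2.le, h3.le⟩

lemma disjoint_sector_preimage_swapHalves : Disjoint sector (swapHalves ⁻¹' sector) := by
  rw [Set.disjoint_left]
  rintro b ⟨-, -, -, -, -, h⟩ ⟨-, -, -, -, -, h'⟩
  rw [swapHalves_apply] at h'
  exact lt_asymm h h'

lemma measurableSet_sector : MeasurableSet sector := by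
  unfold sector
  measurability

lemma integrableOn_sector_and_integral_eq_of_homogeneous {κ : ℝ} (hκ : -4 < κ) {H : E × E → ℝ}
    (hH : ∀ t : ℝ, 0 < t → ∀ q, H (t • q) = t ^ κ * H q)
    (hint : IntegrableOn (fun η => H (duffyPair η) * η 1) (Icc 0 1)) :
    IntegrableOn (fun b => H (pairEquiv b)) sector ∧
      ∫ b in sector, H (pairEquiv b) = (κ + 4)⁻¹ * ∫ η in Icc 0 1, H (duffyPair η) * η 1 :=
  integrableOn_sector_and_integral_eq hκ hint fun a ha => by
    rw [pairEquiv_duffy, hH _ (mem_openCube.1 ha 0).1]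

theorem integrableOn_refTriangle_prod_and_integral_eq {κ : ℝ} (hκ : -4 < κ) {H : E × E → ℝ}
    (hH : ∀ t : ℝ, 0 < t → ∀ q, H (t • q) = t ^ κ * H q)
    (h₁ : IntegrableOn (fun η => H (duffyPair η) * η 1) (Icc 0 1))
    (h₂ : IntegrableOn (fun η => H (duffyPair η).swap * η 1) (Icc 0 1)) :
    IntegrableOn H (refTriangle ×ˢ refTriangle) ∧
      ∫ x in refTriangle, ∫ y in refTriangle, H (x, y) = (κ + 4)⁻¹ *
        ((∫ η in Icc 0 1, H (duffyPair η) * η 1) + ∫ η in Icc 0 1, H (duffyPair η).swap * η 1) := by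
  obtain ⟨hI₁, hV₁⟩ := integrableOn_sector_and_integral_eq_of_homogeneous hκ hH h₁
  obtain ⟨hI₂, hV₂⟩ := integrableOn_sector_and_integral_eq_of_homogeneous
    (H := fun q => H q.swap) hκ (fun t ht q => by simpa using hH t ht q.swap) h₂
  have hmirror : IntegrableOn (fun b => H (pairEquiv b)) (swapHalves ⁻¹' sector) := by
    simpa [Function.comp_def, pairEquiv_swapHalves] using
      (measurePreserving_swapHalves.integrableOn_comp_preimage
        swapHalves.measurableEmbedding).2 hI₂
  have hV₂' : ∫ b in swapHalves ⁻¹' sector, H (pairEquiv b) =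
      ∫ b in sector, H (pairEquiv b).swap := by
    simpa [pairEquiv_swapHalves] using measurePreserving_swapHalves.setIntegral_preimage_emb
      swapHalves.measurableEmbedding (fun b => H (pairEquiv b).swap) sector
  have hI : IntegrableOn (fun b => H (pairEquiv b)) (pairEquiv ⁻¹' (refTriangle ×ˢ refTriangle)) :=
    (hI₁.union hmirror).congr_set_ae preimage_pairEquiv_refTriangle_prod_ae_eq
  have hIH : IntegrableOn H (refTriangle ×ˢ refTriangle) :=
    (measurePreserving_pairEquiv.integrableOn_comp_preimage pairEquiv.measurableEmbedding).1 hI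
  refine ⟨hIH, ?_⟩
  rw [← setIntegral_prod H (Measure.volume_eq_prod E E ▸ hIH), ← Measure.volume_eq_prod,
    ← measurePreserving_pairEquiv.setIntegral_preimage_emb pairEquiv.measurableEmbedding,
    setIntegral_congr_set preimage_pairEquiv_refTriangle_prod_ae_eq,
    setIntegral_union disjoint_sector_preimage_swapHalves
      (swapHalves.measurable measurableSet_sector) hI₁ hmirror, hV₂', hV₁, hV₂]
  ring

lemma phiVertex_smul (i : Fin 5) (t : ℝ) (x y : E) :
    phiVertex i (t • x) (t • y) = t * phiVertex i x y := by
  fin_cases i <;> simp [phiVertex, refBasis, mul_sub]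

lemma phiVertex_duffyPair (i : Fin 5) (η : Fin 3 → ℝ) :
    phiVertex i (duffyPair η).1 (duffyPair η).2 = psiVertex1 i η := by
  fin_cases i <;> simp [phiVertex, psiVertex1, refBasis, duffyPair, e2_apply, mul_sub]

lemma phiVertex_duffyPair_swap (i : Fin 5) (η : Fin 3 → ℝ) :
    phiVertex i (duffyPair η).2 (duffyPair η).1 = psiVertex2 i η := by
  fin_cases i <;> simp [phiVertex, psiVertex2, refBasis, duffyPair, e2_apply, mul_sub]

@[fun_prop]
lemma continuous_psiVertex1 (i : Fin 5) : Continuous (psiVertex1 i) :=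
  (continuous_apply i).comp (by fun_prop : Continuous fun η : Fin 3 → ℝ =>
    ![η 1 - 1, 1 - η 0, η 0, -(η 1 * (1 - η 2)), -(η 1 * η 2)])

@[fun_prop]
lemma continuous_psiVertex2 (i : Fin 5) : Continuous (psiVertex2 i) :=
  (continuous_apply i).comp (by fun_prop : Continuous fun η : Fin 3 → ℝ =>
    ![1 - η 1, η 1 * (1 - η 2), η 1 * η 2, η 0 - 1, -(η 0)])

@[fun_prop]
lemma continuous_e2 {X : Type*} [TopologicalSpace X] {f g : X → ℝ} (hf : Continuous f)
    (hg : Continuous g) : Continuous fun x => e2 (f x) (g x) :=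
  (PiLp.continuous_toLp 2 _).comp (continuous_pi fun k => by fin_cases k <;> simpa)

noncomputable def vertexKernel (Bl Bm : Matrix (Fin 2) (Fin 2) ℝ) (c : ℝ) (i j : Fin 5)
    (q : E × E) : ℝ :=
  phiVertex i q.1 q.2 * phiVertex j q.1 q.2 /
    ‖Matrix.toEuclideanLin Bl q.1 - Matrix.toEuclideanLin Bm q.2‖ ^ c

lemma vertexKernel_smul (Bl Bm : Matrix (Fin 2) (Fin 2) ℝ) (c : ℝ) (i j : Fin 5) {t : ℝ}
    (ht : 0 < t) (q : E × E) :
    vertexKernel Bl Bm c i j (t • q) = t ^ (2 - c) * vertexKernel Bl Bm c i j q := by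
  simp only [vertexKernel, Prod.smul_fst, Prod.smul_snd, phiVertex_smul, map_smul, ← smul_sub,
    norm_smul, norm_of_nonneg ht.le, mul_rpow ht.le (norm_nonneg _), rpow_sub ht, rpow_two]
  rw [mul_div_mul_comm]
  ring

lemma vertexKernel_duffyPair_mul (Bl Bm : Matrix (Fin 2) (Fin 2) ℝ) (c : ℝ) (i j : Fin 5)
    (η : Fin 3 → ℝ) :
    vertexKernel Bl Bm c i j (duffyPair η) * η 1 = psiVertex1 i η * psiVertex1 j η * η 1 /
      ‖Matrix.toEuclideanLin Bl (e2 1 (η 0)) -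
        Matrix.toEuclideanLin Bm (e2 (η 1) (η 1 * η 2))‖ ^ c := by
  rw [vertexKernel, phiVertex_duffyPair, phiVertex_duffyPair, div_mul_eq_mul_div]
  rfl

lemma vertexKernel_duffyPair_swap_mul (Bl Bm : Matrix (Fin 2) (Fin 2) ℝ) (c : ℝ) (i j : Fin 5)
    (η : Fin 3 → ℝ) :
    vertexKernel Bl Bm c i j (duffyPair η).swap * η 1 = psiVertex2 i η * psiVertex2 j η * η 1 /
      ‖Matrix.toEuclideanLin Bl (e2 (η 1) (η 1 * η 2)) -
        Matrix.toEuclideanLin Bm (e2 1 (η 0))‖ ^ c := by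
  rw [vertexKernel, Prod.fst_swap, Prod.snd_swap, phiVertex_duffyPair_swap,
    phiVertex_duffyPair_swap, div_mul_eq_mul_div]
  rfl

lemma duffyPair_mem_refTriangle {η : Fin 3 → ℝ} (hη : η ∈ Icc 0 1) :
    (duffyPair η).1 ∈ refTriangle ∧ (duffyPair η).2 ∈ refTriangle := by
  obtain ⟨h0, h1⟩ := hη
  simp only [duffyPair, refTriangle, mem_ofPred_eq, e2_apply, Matrix.cons_val_zero,
    Matrix.cons_val_one]
  exact ⟨⟨h0 0, h1 0, le_rfl⟩, mul_nonneg (h0 1) (h0 2), mul_le_of_le_one_right (h0 1) (h1 2), h1 1⟩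

lemma duffyPair_fst_ne_zero (η : Fin 3 → ℝ) : (duffyPair η).1 ≠ 0 := fun h => by
  simpa [duffyPair, e2_apply] using congrArg (· 0) h

lemma toEuclideanLin_injective {n : Type*} [Fintype n] [DecidableEq n] {B : Matrix n n ℝ}
    (hB : IsUnit B.det) : Function.Injective (Matrix.toEuclideanLin B) := fun u v h =>
  WithLp.ofLp_injective 2 <| Matrix.mulVec_injective_iff_isUnit.2
    ((Matrix.isUnit_iff_isUnit_det B).2 hB) (by simpa using congrArg WithLp.ofLp h)

lemma eq_zero_of_toEuclideanLin_eq {Bl Bm : Matrix (Fin 2) (Fin 2) ℝ} (hBl : IsUnit Bl.det)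
    (hBm : IsUnit Bm.det) {p : E}
    (hint : ((fun x => Matrix.toEuclideanLin Bl x + p) '' refTriangle) ∩
        ((fun x => Matrix.toEuclideanLin Bm x + p) '' refTriangle) = {p})
    {u v : E} (hu : u ∈ refTriangle) (hv : v ∈ refTriangle)
    (h : Matrix.toEuclideanLin Bl u = Matrix.toEuclideanLin Bm v) : u = 0 ∧ v = 0 := by
  have hp : Matrix.toEuclideanLin Bl u + p = p := by
    rw [← mem_singleton_iff, ← hint]
    exact ⟨⟨u, hu, rfl⟩, v, hv, by rw [h]⟩
  have hu0 : Matrix.toEuclideanLin Bl u = 0 := add_eq_right.1 hp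
  exact ⟨(toEuclideanLin_injective hBl).eq_iff.1 (hu0.trans (map_zero _).symm),
    (toEuclideanLin_injective hBm).eq_iff.1 ((h ▸ hu0).trans (map_zero _).symm)⟩

lemma norm_sub_duffyPair_pos {Bl Bm : Matrix (Fin 2) (Fin 2) ℝ} (hBl : IsUnit Bl.det)
    (hBm : IsUnit Bm.det) {p : E}
    (hint : ((fun x => Matrix.toEuclideanLin Bl x + p) '' refTriangle) ∩
        ((fun x => Matrix.toEuclideanLin Bm x + p) '' refTriangle) = {p})
    {η : Fin 3 → ℝ} (hη : η ∈ Icc 0 1) :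
    0 < ‖Matrix.toEuclideanLin Bl (duffyPair η).1 - Matrix.toEuclideanLin Bm (duffyPair η).2‖ ∧
      0 < ‖Matrix.toEuclideanLin Bl (duffyPair η).2 -
        Matrix.toEuclideanLin Bm (duffyPair η).1‖ := by
  obtain ⟨h₁, h₂⟩ := duffyPair_mem_refTriangle hη
  refine ⟨norm_pos_iff.2 (sub_ne_zero.2 fun h => ?_), norm_pos_iff.2 (sub_ne_zero.2 fun h => ?_)⟩
  · exact duffyPair_fst_ne_zero η (eq_zero_of_toEuclideanLin_eq hBl hBm hint h₁ h₂ h).1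
  · exact duffyPair_fst_ne_zero η (eq_zero_of_toEuclideanLin_eq hBl hBm hint h₂ h₁ h).2

lemma integrableOn_div_rpow_of_pos {X : Type*} [TopologicalSpace X] [T2Space X]
    [MeasurableSpace X] [OpensMeasurableSpace X] {μ : Measure X} [IsFiniteMeasureOnCompacts μ]
    {K : Set X} (hK : IsCompact K) {f g : X → ℝ} (hf : Continuous f) (hg : Continuous g)
    (hg0 : ∀ x ∈ K, 0 < g x) (c : ℝ) : IntegrableOn (fun x => f x / g x ^ c) K μ :=
  (hf.continuousOn.div (hg.continuousOn.rpow_const fun x hx => Or.inl (hg0 x hx).ne')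
    fun x hx => (rpow_pos_of_pos (hg0 x hx) c).ne').integrableOn_compact hK

end VertexTouching

open VertexTouching

/-- **Reduction of the singular integral over a pair of vertex-touching triangles.**
If `T_ℓ = χ_ℓ(T̂)` and `T_m = χ_m(T̂)` intersect exactly at the single point `p`, then for all
local indices `i, j` the singular double integral over `T̂ × T̂` is absolutely convergent and
equals `1/(4−2s)` times the sum of two regular integrals over the unit cube `[0,1]³`. -/
theorem vertex_touching_reduction (s : ℝ) (hs : s ∈ Set.Ioo (0:ℝ) 1)
    (Bl Bm : Matrix (Fin 2) (Fin 2) ℝ) (hBl : IsUnit Bl.det) (hBm : IsUnit Bm.det)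
    (p : EuclideanSpace ℝ (Fin 2))
    (hint : ((fun x => Matrix.toEuclideanLin Bl x + p) '' refTriangle) ∩
        ((fun x => Matrix.toEuclideanLin Bm x + p) '' refTriangle) = {p})
    (i j : Fin 5) :
    IntegrableOn
      (fun q : EuclideanSpace ℝ (Fin 2) × EuclideanSpace ℝ (Fin 2) =>
        phiVertex i q.1 q.2 * phiVertex j q.1 q.2 /
          ‖(Matrix.toEuclideanLin Bl q.1 + p) - (Matrix.toEuclideanLin Bm q.2 + p)‖ ^
            ((2 : ℝ) + 2 * s))
      (refTriangle ×ˢ refTriangle) volume ∧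
    IntegrableOn
      (fun η : Fin 3 → ℝ => psiVertex1 i η * psiVertex1 j η * η 1 /
        ‖Matrix.toEuclideanLin Bl (e2 1 (η 0)) -
          Matrix.toEuclideanLin Bm (e2 (η 1) (η 1 * η 2))‖ ^ ((2 : ℝ) + 2 * s))
      (Set.Icc 0 1) volume ∧
    IntegrableOn
      (fun η : Fin 3 → ℝ => psiVertex2 i η * psiVertex2 j η * η 1 /
        ‖Matrix.toEuclideanLin Bl (e2 (η 1) (η 1 * η 2)) -
          Matrix.toEuclideanLin Bm (e2 1 (η 0))‖ ^ ((2 : ℝ) + 2 * s))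
      (Set.Icc 0 1) volume ∧
    ∫ x in refTriangle, ∫ y in refTriangle,
        phiVertex i x y * phiVertex j x y /
          ‖(Matrix.toEuclideanLin Bl x + p) - (Matrix.toEuclideanLin Bm y + p)‖ ^
            ((2 : ℝ) + 2 * s) =
      (1 / (4 - 2 * s)) *
        ((∫ η in Set.Icc (0 : Fin 3 → ℝ) 1,
            psiVertex1 i η * psiVertex1 j η * η 1 /
              ‖Matrix.toEuclideanLin Bl (e2 1 (η 0)) -
                Matrix.toEuclideanLin Bm (e2 (η 1) (η 1 * η 2))‖ ^ ((2 : ℝ) + 2 * s)) +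
         (∫ η in Set.Icc (0 : Fin 3 → ℝ) 1,
            psiVertex2 i η * psiVertex2 j η * η 1 /
              ‖Matrix.toEuclideanLin Bl (e2 (η 1) (η 1 * η 2)) -
                Matrix.toEuclideanLin Bm (e2 1 (η 0))‖ ^ ((2 : ℝ) + 2 * s))) := by
  have hκ : -4 < 2 - (2 + 2 * s) := by linarith [hs.2]
  have hψ₁ : IntegrableOn (fun η => vertexKernel Bl Bm (2 + 2 * s) i j (duffyPair η) * η 1)
      (Icc 0 1) := by
    simp only [vertexKernel_duffyPair_mul]
    exact integrableOn_div_rpow_of_pos isCompact_Icc (by fun_prop) (by fun_prop)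
      (fun η hη => (norm_sub_duffyPair_pos hBl hBm hint hη).1) _
  have hψ₂ : IntegrableOn (fun η => vertexKernel Bl Bm (2 + 2 * s) i j (duffyPair η).swap * η 1)
      (Icc 0 1) := by
    simp only [vertexKernel_duffyPair_swap_mul]
    exact integrableOn_div_rpow_of_pos isCompact_Icc (by fun_prop) (by fun_prop)
      (fun η hη => (norm_sub_duffyPair_pos hBl hBm hint hη).2) _
  obtain ⟨hI, hV⟩ := integrableOn_refTriangle_prod_and_integral_eq hκ
    (fun t ht q => vertexKernel_smul Bl Bm (2 + 2 * s) i j ht q) hψ₁ hψ₂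
  simp only [vertexKernel_duffyPair_mul, vertexKernel_duffyPair_swap_mul] at hψ₁ hψ₂ hV
  simp only [add_sub_add_right_eq_sub]
  refine ⟨hI, hψ₁, hψ₂, hV.trans (by ring)⟩
end
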